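/- arXiv:0805.2625 — 2 statements merged into one kernel-verified Lean document; each statement's English description precedes it below -/
import Mathlib

section
/- Let F be an arbitrary field and n ≥ 1. For every g ∈ GL_{2n}(F), the transpose gᵗ lies in the double coset Sp_{2n}(F)·g·Sp_{2n}(F); that is, there exist h₁, h₂ ∈ Sp_{2n}(F) such that gᵗ = h₁ g h₂. -/
/-!
Write `σ X = J⁻¹ Xᵀ J` for the adjoint with respect to the symplectic form `ω(x, y) = xᵀ J y`.
Then `Sp_{2n} = {h | σ h * h = 1}` and `gᵀ = J (σ g) J⁻¹`, so it suffices to put `σ g` in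
`Sp · g · Sp`. The operator `u = g σ(g)` is `ω`-selfadjoint and `ω(u ·, ·)` is alternating.
Such a `u` leaves invariant two complementary Lagrangians `P` and `Q`: a Krylov subspace of
`u` of maximal dimension together with a suitable Krylov subspace in duality with it spans a
nondegenerate invariant subspace, and one recurses into its orthogonal complement. The map `b`
acting as `u` on `P` and as the identity on `Q` commutes with `u` and satisfies `σ(b) b = u`,
so `b` is normal, and `h₁ = σ(g) σ(b)⁻¹`, `h₂ = g⁻¹ σ(b)` are symplectic with `σ g = h₁ g h₂`.
-/

open Matrix

/-- `J_{2n} = [[0, I_n], [-I_n, 0]]`, the standard symplectic matrix. -/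
def symplecticJ (n : ℕ) (F : Type*) [Field F] :
    Matrix (Fin n ⊕ Fin n) (Fin n ⊕ Fin n) F :=
  Matrix.fromBlocks 0 1 (-1) 0

/-- A matrix `g` is symplectic if `gᵀ J g = J`. -/
def IsSymplecticMat {n : ℕ} {F : Type*} [Field F]
    (g : Matrix (Fin n ⊕ Fin n) (Fin n ⊕ Fin n) F) : Prop :=
  gᵀ * symplecticJ n F * g = symplecticJ n F

open Module Submodule

namespace Module.End

section Semiring

variable {R M : Type*} [Semiring R] [AddCommMonoid M] [Module R M] (u : Module.End R M)

def krylov (x : M) (d : ℕ) : Fin d → M := fun i ↦ (u ^ (i : ℕ)) x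

lemma krylov_succ (x : M) (d : ℕ) :
    u.krylov x (d + 1) = Fin.snoc (u.krylov x d) ((u ^ d) x) := by
  ext i
  induction i using Fin.lastCases <;> simp [krylov]

end Semiring

variable {F V : Type*} [Field F] [AddCommGroup V] [Module F V] {u : Module.End F V}

lemma pow_apply_mem_span_krylov {x : V} {d : ℕ} (hd : LinearIndependent F (u.krylov x d))
    (hd' : ¬ LinearIndependent F (u.krylov x (d + 1))) :
    (u ^ d) x ∈ span F (Set.range (u.krylov x d)) := by
  rw [krylov_succ, linearIndependent_finSnoc] at hd'
  tauto

lemma span_krylov_mem_invtSubmodule {x : V} {d : ℕ}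
    (hd : (u ^ d) x ∈ span F (Set.range (u.krylov x d))) :
    span F (Set.range (u.krylov x d)) ∈ u.invtSubmodule := by
  rw [mem_invtSubmodule_iff_map_le, map_span_le]
  rintro _ ⟨i, rfl⟩
  have hi : u (u.krylov x d i) = (u ^ ((i : ℕ) + 1)) x := by
    rw [pow_succ', mul_apply]; rfl
  rw [hi]
  obtain h | h := (Nat.add_one_le_iff.2 i.isLt).lt_or_eq
  · exact subset_span ⟨⟨_, h⟩, rfl⟩
  · rwa [h]

variable (u) in
lemma exists_linearIndependent_krylov_maximal [FiniteDimensional F V] [Nontrivial V] :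
    ∃ d x, 0 < d ∧ LinearIndependent F (u.krylov x d) ∧
      ∀ y, ¬ LinearIndependent F (u.krylov y (d + 1)) := by
  classical
  let P d := ∃ x, LinearIndependent F (u.krylov x d)
  have hle : ∀ d, P d → d ≤ finrank F V := fun d ⟨x, hx⟩ ↦ by
    simpa using hx.fintype_card_le_finrank
  obtain ⟨x, hx⟩ := exists_ne (0 : V)
  have h1 : P 1 := ⟨x, linearIndependent_unique_iff.2 (by simpa [krylov] using hx)⟩
  obtain ⟨y, hy⟩ := Nat.findGreatest_spec (hle 1 h1) h1
  refine ⟨_, y, Nat.le_findGreatest (hle 1 h1) h1, hy, fun z hz ↦ ?_⟩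
  have := Nat.le_findGreatest (P := P) (hle _ ⟨z, hz⟩) ⟨z, hz⟩
  omega

end Module.End

lemma Matrix.det_hankel_ne_zero {R : Type*} [CommRing R] [Nontrivial R] {d : ℕ} (T : ℕ → R)
    (hT : ∀ t < d - 1, T t = 0) (hT' : T (d - 1) = 1) :
    (Matrix.of fun i j : Fin d ↦ T (i + j)).det ≠ 0 := by
  set M := Matrix.of fun i j : Fin d ↦ T (i + j)
  have hlow : (M.submatrix id Fin.revPerm).IsLowerTriangular := by
    intro i j hij
    simp only [OrderDual.toDual_lt_toDual] at hij
    simp only [M, submatrix_apply, id, Fin.revPerm_apply, of_apply, Fin.val_rev]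
    exact hT _ (by omega)
  have hdiag (i : Fin d) : T (i + (d - (i + 1))) = 1 := by
    rw [show (i : ℕ) + (d - (i + 1)) = d - 1 by omega, hT']
  have hdet := det_permute' Fin.revPerm M
  rw [det_of_isLowerTriangular _ hlow] at hdet
  intro h
  simp [M, h, Fin.val_rev, hdiag] at hdet

namespace LinearMap.BilinForm

section CommRing

variable {R M : Type*} [CommRing R] [AddCommGroup M] [Module R M] {B : LinearMap.BilinForm R M}
  {u : Module.End R M}

lemma isSelfAdjoint_of_isAlt_comp (hB : B.IsAlt) (hBu : (B ∘ₗ u).IsAlt) :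
    LinearMap.IsSelfAdjoint B u := fun x y ↦
  (LinearMap.IsAlt.neg hBu y x).symm.trans (LinearMap.IsAlt.neg hB (u y) x)

lemma apply_pow_apply_pow (hu : LinearMap.IsSelfAdjoint B u) (i j : ℕ) (x y : M) :
    B ((u ^ i) x) ((u ^ j) y) = B ((u ^ (i + j)) x) y := by
  induction j generalizing i with
  | zero => rfl
  | succ j ih =>
    rw [pow_succ', Module.End.mul_apply, ← hu, ← Module.End.mul_apply, ← pow_succ', ih,
      add_right_comm, add_assoc]

lemma apply_pow_apply_self (hB : B.IsAlt) (hBu : (B ∘ₗ u).IsAlt) (k : ℕ) (x : M) :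
    B ((u ^ k) x) x = 0 := by
  have hu := isSelfAdjoint_of_isAlt_comp hB hBu
  obtain ⟨r, rfl | rfl⟩ := Nat.even_or_odd' k
  · rw [two_mul, ← apply_pow_apply_pow hu]
    exact hB _
  · rw [two_mul, add_right_comm, ← apply_pow_apply_pow hu, pow_succ', Module.End.mul_apply]
    exact hBu _

lemma span_le_orthogonal_span {S : Set M} (hS : ∀ x ∈ S, ∀ y ∈ S, B x y = 0) :
    span R S ≤ B.orthogonal (span R S) := by
  refine span_le.2 fun y hy ↦ mem_orthogonal_iff.2 fun x hx ↦ ?_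
  induction hx using span_induction with
  | mem x hx => exact hS x hx y hy
  | zero => simp
  | add a b _ _ ha hb => simp [ha, hb]
  | smul r a _ ha => simp [ha]

lemma span_krylov_le_orthogonal (hB : B.IsAlt) (hBu : (B ∘ₗ u).IsAlt) (x : M) (d : ℕ) :
    span R (Set.range (u.krylov x d)) ≤ B.orthogonal (span R (Set.range (u.krylov x d))) := by
  refine span_le_orthogonal_span ?_
  rintro _ ⟨i, rfl⟩ _ ⟨j, rfl⟩
  rw [Module.End.krylov, Module.End.krylov,
    apply_pow_apply_pow (isSelfAdjoint_of_isAlt_comp hB hBu)]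
  exact apply_pow_apply_self hB hBu _ x

lemma inf_orthogonal_le_orthogonal_sup (P Q : Submodule R M) :
    B.orthogonal P ⊓ B.orthogonal Q ≤ B.orthogonal (P ⊔ Q) := by
  rintro x ⟨hxP, hxQ⟩
  refine mem_orthogonal_iff.2 fun n hn ↦ ?_
  obtain ⟨p, hp, q, hq, rfl⟩ := mem_sup.1 hn
  rw [map_add, LinearMap.add_apply, mem_orthogonal_iff.1 hxP p hp, mem_orthogonal_iff.1 hxQ q hq,
    add_zero]

lemma sup_le_orthogonal_sup (hB : B.IsRefl) {P Q : Submodule R M} (hP : P ≤ B.orthogonal P)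
    (hQ : Q ≤ B.orthogonal Q) (hPQ : Q ≤ B.orthogonal P) :
    P ⊔ Q ≤ B.orthogonal (P ⊔ Q) :=
  sup_le ((le_inf hP fun x hx ↦ mem_orthogonal_iff.2 fun _ hn ↦ hB _ _ (hPQ hn x hx)).trans
      (inf_orthogonal_le_orthogonal_sup P Q))
    ((le_inf hPQ hQ).trans (inf_orthogonal_le_orthogonal_sup P Q))

lemma isCompl_of_sup_eq_top (hB : B.Nondegenerate) {P Q : Submodule R M}
    (hP : P ≤ B.orthogonal P) (hQ : Q ≤ B.orthogonal Q) (h : P ⊔ Q = ⊤) : IsCompl P Q := by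
  refine ⟨Submodule.disjoint_def.2 fun x hxP hxQ ↦ hB.2 x fun n ↦ ?_, codisjoint_iff.2 h⟩
  exact inf_orthogonal_le_orthogonal_sup P Q ⟨hP hxP, hQ hxQ⟩ n (h ▸ mem_top)

lemma orthogonal_mem_invtSubmodule (hu : LinearMap.IsSelfAdjoint B u) {W : Submodule R M}
    (hW : W ∈ u.invtSubmodule) : B.orthogonal W ∈ u.invtSubmodule :=
  fun x hx ↦ mem_orthogonal_iff.2 fun n hn ↦ (hu n x).symm.trans (hx _ (hW hn))

lemma map_subtype_le_orthogonal {C : Submodule R M} {N : Submodule R C}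
    (hN : N ≤ (B.restrict C).orthogonal N) :
    N.map C.subtype ≤ B.orthogonal (N.map C.subtype) := by
  rintro _ ⟨x, hx, rfl⟩ _ ⟨y, hy, rfl⟩
  exact hN hx y hy

lemma exists_commute_apply_apply_eq_of_isCompl (hu : LinearMap.IsSelfAdjoint B u)
    {P Q : Submodule R M} (hPQ : IsCompl P Q) (hP : P ∈ u.invtSubmodule)
    (hQ : Q ∈ u.invtSubmodule) (hPB : P ≤ B.orthogonal P) (hQB : Q ≤ B.orthogonal Q) :
    ∃ b : Module.End R M, Commute b u ∧ ∀ x y, B (b x) (b y) = B (u x) y := by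
  set π := P.projection Q hPQ
  have hπ : Commute π u := (IsIdempotentElem.commute_iff (isIdempotentElem_projection hPQ)).2
    ⟨by rwa [range_projection], by rwa [ker_projection]⟩
  refine ⟨u * π + (1 - π), ((Commute.refl u).mul_left hπ).add_left
    ((Commute.one_left u).sub_left hπ), fun x y ↦ ?_⟩
  have hb : ∀ p ∈ P, ∀ q ∈ Q, (u * π + (1 - π)) (p + q) = u p + q := fun p hp q hq ↦ by
    simp [π, projection_apply_of_mem_left hPQ hp, projection_apply_of_mem_right hPQ hq]
  obtain ⟨p, hp, q, hq, rfl⟩ := mem_sup.1 (hPQ.sup_eq_top ▸ mem_top : x ∈ P ⊔ Q)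
  obtain ⟨p', hp', q', hq', rfl⟩ := mem_sup.1 (hPQ.sup_eq_top ▸ mem_top : y ∈ P ⊔ Q)
  have h₁ : B (u p) (u p') = 0 := hPB (hP hp') _ (hP hp)
  have h₂ : B q q' = 0 := hQB hq' _ hq
  have h₃ : B (u p) p' = 0 := hPB hp' _ (hP hp)
  have h₄ : B (u q) q' = 0 := hQB hq' _ (hQ hq)
  rw [hb p hp q hq, hb p' hp' q' hq']
  simp only [map_add, LinearMap.add_apply, h₁, h₂, h₃, h₄, hu q p']

section Gram

variable {d : ℕ} (B) (a c : Fin d → M)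

lemma apply_sum_smul_eq_mulVec (β : Fin d → R) (i : Fin d) :
    B (a i) (∑ j, β j • c j) = ((Matrix.of fun i j ↦ B (a i) (c j)) *ᵥ β) i := by
  simp [mulVec, dotProduct, mul_comm]

lemma sum_smul_apply_eq_vecMul (α : Fin d → R) (j : Fin d) :
    B (∑ i, α i • a i) (c j) = (α ᵥ* Matrix.of fun i j ↦ B (a i) (c j)) j := by
  simp [vecMul, dotProduct]

end Gram

end CommRing

variable {F V : Type*} [Field F] [AddCommGroup V] [Module F V] {B : LinearMap.BilinForm F V}
  {u : Module.End F V}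

section Gram

variable {d : ℕ} {a c : Fin d → V}

lemma linearIndependent_of_det_ne_zero (hM : (Matrix.of fun i j ↦ B (a i) (c j)).det ≠ 0) :
    LinearIndependent F c :=
  Fintype.linearIndependent_iff.2 fun β hβ ↦ congrFun <| eq_zero_of_mulVec_eq_zero hM <|
    funext fun i ↦ by rw [← apply_sum_smul_eq_mulVec, hβ, map_zero, Pi.zero_apply]

lemma disjoint_orthogonal_of_det_ne_zero (hB : B.IsAlt)
    (hM : (Matrix.of fun i j ↦ B (a i) (c j)).det ≠ 0)
    (ha : span F (Set.range a) ≤ B.orthogonal (span F (Set.range a)))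
    (hc : span F (Set.range c) ≤ B.orthogonal (span F (Set.range c))) :
    Disjoint (span F (Set.range a) ⊔ span F (Set.range c))
      (B.orthogonal (span F (Set.range a) ⊔ span F (Set.range c))) := by
  refine Submodule.disjoint_def.2 fun x hx hxo ↦ ?_
  obtain ⟨p, hp, q, hq, rfl⟩ := mem_sup.1 hx
  have hap : ∀ k, B (a k) p = 0 := fun k ↦ ha hp _ (subset_span ⟨k, rfl⟩)
  have hcq : ∀ k, B (c k) q = 0 := fun k ↦ hc hq _ (subset_span ⟨k, rfl⟩)
  have hxa : ∀ k, B (a k) (p + q) = 0 := fun k ↦ hxo _ (mem_sup_left (subset_span ⟨k, rfl⟩))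
  have hxc : ∀ k, B (c k) (p + q) = 0 := fun k ↦ hxo _ (mem_sup_right (subset_span ⟨k, rfl⟩))
  obtain ⟨α, rfl⟩ := (mem_span_range_iff_exists_fun F).1 hp
  obtain ⟨β, rfl⟩ := (mem_span_range_iff_exists_fun F).1 hq
  have hβ : β = 0 := eq_zero_of_mulVec_eq_zero hM <| funext fun k ↦ by
    simpa [← apply_sum_smul_eq_mulVec, hap] using hxa k
  have hα : α = 0 := eq_zero_of_vecMul_eq_zero hM <| funext fun k ↦ by
    rw [← sum_smul_apply_eq_vecMul, Pi.zero_apply, hB.eq_iff]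
    simpa [hcq] using hxc k
  simp [hα, hβ]

end Gram

lemma exists_apply_eq_ite [FiniteDimensional F V] (hB : B.Nondegenerate) {ι : Type*}
    [DecidableEq ι] {f : ι → V} (hf : LinearIndependent F f) (i₀ : ι) :
    ∃ w, ∀ i, B (f i) w = if i = i₀ then 1 else 0 := by
  have hnot : f i₀ ∉ span F (f '' {i₀}ᶜ) := hf.notMem_span_image (by simp)
  obtain ⟨φ, hφ, hφ0⟩ := exists_dual_map_eq_bot_of_notMem hnot inferInstance
  refine ⟨(B.flip.toDual hB.flip).symm ((φ (f i₀))⁻¹ • φ), fun i ↦ ?_⟩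
  rw [← flip_apply B, ← toDual_def hB.flip, LinearEquiv.apply_symm_apply]
  split_ifs with h
  · subst h; simp [hφ]
  · have : φ (f i) = 0 :=
      (Submodule.eq_bot_iff _).1 hφ0 _ (mem_map_of_mem (subset_span ⟨i, h, rfl⟩))
    simp [this]

/-- The Krylov family of a vector `v` of maximal Krylov length `d`, and that of a vector `w`
dual to `u^(d-1) v`, have a unit anti-triangular Hankel Gram matrix. -/
theorem exists_hyperbolic_pair [FiniteDimensional F V] [Nontrivial V] (hB : B.Nondegenerate)
    (hBalt : B.IsAlt) (hBu : (B ∘ₗ u).IsAlt) :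
    ∃ P Q : Submodule F V, P ∈ u.invtSubmodule ∧ Q ∈ u.invtSubmodule ∧
      P ≤ B.orthogonal P ∧ Q ≤ B.orthogonal Q ∧ P ⊔ Q ≠ ⊥ ∧
      Disjoint (P ⊔ Q) (B.orthogonal (P ⊔ Q)) := by
  obtain ⟨d, v, hd, hv, hmax⟩ := u.exists_linearIndependent_krylov_maximal
  obtain ⟨w, hw⟩ := exists_apply_eq_ite hB hv ⟨d - 1, by omega⟩
  have hgram : (Matrix.of fun i j ↦ B (u.krylov v d i) (u.krylov w d j)) =
      Matrix.of fun i j : Fin d ↦ B ((u ^ (i + j : ℕ)) v) w := by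
    ext i j
    exact apply_pow_apply_pow (isSelfAdjoint_of_isAlt_comp hBalt hBu) _ _ _ _
  have hM : (Matrix.of fun i j ↦ B (u.krylov v d i) (u.krylov w d j)).det ≠ 0 := by
    rw [hgram]
    refine det_hankel_ne_zero (fun t ↦ B ((u ^ t) v) w) (fun t ht ↦ ?_) ?_
    · exact (hw ⟨t, by omega⟩).trans (if_neg fun h ↦ by simp [Fin.ext_iff] at h; omega)
    · exact (hw ⟨d - 1, by omega⟩).trans (if_pos rfl)
  have hw' := linearIndependent_of_det_ne_zero hM
  refine ⟨_, _, Module.End.span_krylov_mem_invtSubmodule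
      (Module.End.pow_apply_mem_span_krylov hv (hmax v)),
    Module.End.span_krylov_mem_invtSubmodule (Module.End.pow_apply_mem_span_krylov hw' (hmax w)),
    span_krylov_le_orthogonal hBalt hBu v d, span_krylov_le_orthogonal hBalt hBu w d,
    fun h ↦ hv.ne_zero ⟨0, hd⟩ ?_, disjoint_orthogonal_of_det_ne_zero hBalt hM
      (span_krylov_le_orthogonal hBalt hBu v d) (span_krylov_le_orthogonal hBalt hBu w d)⟩
  exact (Submodule.eq_bot_iff _).1 h _ (mem_sup_left (subset_span ⟨_, rfl⟩))

lemma nondegenerate_restrict_orthogonal [FiniteDimensional F V] (hB : B.Nondegenerate)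
    (hBrefl : B.IsRefl) {W : Submodule F V} (hW : IsCompl W (B.orthogonal W)) :
    (B.restrict (B.orthogonal W)).Nondegenerate :=
  (restrict_nondegenerate_iff_isCompl_orthogonal hBrefl).2 <| by
    rw [orthogonal_orthogonal hB hBrefl]
    exact hW.symm

theorem exists_isCompl_invtSubmodule_le_orthogonal [FiniteDimensional F V]
    (hB : B.Nondegenerate) (hBalt : B.IsAlt) (hBu : (B ∘ₗ u).IsAlt) :
    ∃ P Q : Submodule F V, IsCompl P Q ∧ P ∈ u.invtSubmodule ∧ Q ∈ u.invtSubmodule ∧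
      P ≤ B.orthogonal P ∧ Q ≤ B.orthogonal Q := by
  induction hd : finrank F V using Nat.strong_induction_on generalizing V with
  | _ d ih =>
  rcases subsingleton_or_nontrivial V with hV | hV
  · exact ⟨⊥, ⊤, isCompl_bot_top, Module.End.invtSubmodule.bot_mem u,
      Module.End.invtSubmodule.top_mem u, bot_le, fun x _ ↦ by simp [Subsingleton.elim x 0]⟩
  obtain ⟨P₀, Q₀, hP₀, hQ₀, hP₀B, hQ₀B, hW, hWdisj⟩ := exists_hyperbolic_pair hB hBalt hBu
  have hBrefl : B.IsRefl := IsAlt.isRefl hBalt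
  have hWC := (isCompl_orthogonal_iff_disjoint hBrefl).2 hWdisj
  set C := B.orthogonal (P₀ ⊔ Q₀)
  have hC : C ∈ u.invtSubmodule := orthogonal_mem_invtSubmodule
    (isSelfAdjoint_of_isAlt_comp hBalt hBu) (Module.End.invtSubmodule.sup_mem hP₀ hQ₀)
  have hCd : finrank F C < d := by
    have := Submodule.finrank_add_eq_of_isCompl hWC
    have := Submodule.finrank_eq_zero.not.2 hW
    omega
  obtain ⟨P₁, Q₁, hPQ₁, hP₁, hQ₁, hP₁B, hQ₁B⟩ := ih _ hCd (B := B.restrict C)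
    (u := u.restrict hC) (nondegenerate_restrict_orthogonal hB hBrefl hWC) (fun x ↦ hBalt x)
    (fun x ↦ hBu x) rfl
  have hP := sup_le_orthogonal_sup hBrefl hP₀B (map_subtype_le_orthogonal hP₁B)
    ((map_subtype_le C P₁).trans (orthogonal_le le_sup_left))
  have hQ := sup_le_orthogonal_sup hBrefl hQ₀B (map_subtype_le_orthogonal hQ₁B)
    ((map_subtype_le C Q₁).trans (orthogonal_le le_sup_right))
  refine ⟨_, _, isCompl_of_sup_eq_top hB hP hQ ?_,
    Module.End.invtSubmodule.sup_mem hP₀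
      (Module.End.invtSubmodule.map_subtype_mem_of_mem_invtSubmodule u hC hP₁),
    Module.End.invtSubmodule.sup_mem hQ₀
      (Module.End.invtSubmodule.map_subtype_mem_of_mem_invtSubmodule u hC hQ₁), hP, hQ⟩
  rw [sup_sup_sup_comm, ← Submodule.map_sup, hPQ₁.sup_eq_top, map_subtype_top, hWC.sup_eq_top]

theorem exists_commute_apply_apply_eq [FiniteDimensional F V] (hB : B.Nondegenerate)
    (hBalt : B.IsAlt) (hBu : (B ∘ₗ u).IsAlt) :
    ∃ b : Module.End F V, Commute b u ∧ ∀ x y, B (b x) (b y) = B (u x) y := by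
  obtain ⟨P, Q, hPQ, hP, hQ, hPB, hQB⟩ :=
    exists_isCompl_invtSubmodule_le_orthogonal hB hBalt hBu
  exact exists_commute_apply_apply_eq_of_isCompl (isSelfAdjoint_of_isAlt_comp hBalt hBu) hPQ hP
    hQ hPB hQB

end LinearMap.BilinForm

namespace Matrix

lemma dotProduct_transpose_mul_mul_mulVec {R ι : Type*} [CommSemiring R] [Fintype ι]
    (A J C : Matrix ι ι R) (x y : ι → R) :
    x ⬝ᵥ (Aᵀ * J * C) *ᵥ y = (A *ᵥ x) ⬝ᵥ J *ᵥ C *ᵥ y := by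
  rw [← mulVec_mulVec, ← mulVec_mulVec, dotProduct_mulVec, vecMul_transpose]

theorem exists_commute_transpose_mul_mul_eq {F ι : Type*} [Field F] [Fintype ι] [DecidableEq ι]
    {J U : Matrix ι ι F} (hJ : J.det ≠ 0) (hJalt : ∀ x, x ⬝ᵥ J *ᵥ x = 0)
    (hUJalt : ∀ x, x ⬝ᵥ (Uᵀ * J) *ᵥ x = 0) :
    ∃ b : Matrix ι ι F, Commute b U ∧ bᵀ * J * b = Uᵀ * J := by
  set B : LinearMap.BilinForm F (ι → F) := toLinearMap₂' F J
  have hB : B.Nondegenerate := LinearMap.nondegenerate_toLinearMap₂'_iff_det_ne_zero.2 hJ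
  have hBU (x : ι → F) : (B ∘ₗ toLinAlgEquiv' U) x x = 0 := by
    have := hUJalt x
    rw [← mul_one (Uᵀ * J), dotProduct_transpose_mul_mul_mulVec, one_mulVec] at this
    simpa [B, toLinearMap₂'_apply'] using this
  obtain ⟨b, hbU, hb⟩ := LinearMap.BilinForm.exists_commute_apply_apply_eq hB
    (fun x ↦ (toLinearMap₂'_apply' J x x).trans (hJalt x)) hBU
  refine ⟨LinearMap.toMatrixAlgEquiv' b, by simpa using hbU.map LinearMap.toMatrixAlgEquiv', ?_⟩
  refine (toLinearMap₂' F (S₁ := F) (S₂ := F)).injective (LinearMap.ext₂ fun x y ↦ ?_)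
  rw [toLinearMap₂'_apply', toLinearMap₂'_apply', dotProduct_transpose_mul_mul_mulVec,
    ← mul_one (Uᵀ * J), dotProduct_transpose_mul_mul_mulVec, one_mulVec]
  simpa [B, toLinearMap₂'_apply', ← mulVec_mulVec, LinearMap.toMatrixAlgEquiv',
    LinearMap.toMatrix'_mulVec] using hb x y

end Matrix

theorem exists_apply_eq_mul_mul_of_normal {M : Type*} [Monoid M] (σ : M → M)
    (σ_mul : ∀ x y, σ (x * y) = σ y * σ x) (σ_invol : Function.Involutive σ) (g b : Mˣ)
    (hb : σ b * b = g * σ g) (hnormal : Commute (b : M) (σ b)) :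
    ∃ h₁ h₂ : M, σ h₁ * h₁ = 1 ∧ σ h₂ * h₂ = 1 ∧ σ g = h₁ * g * h₂ := by
  have σ_one : σ 1 = 1 := by simpa [σ_invol 1] using (σ_mul 1 (σ 1)).symm
  have σ_mul_σ_inv (a : Mˣ) : σ a * σ ↑a⁻¹ = 1 := by rw [← σ_mul, a.inv_mul, σ_one]
  have σ_inv_mul_σ (a : Mˣ) : σ ↑a⁻¹ * σ a = 1 := by rw [← σ_mul, a.mul_inv, σ_one]
  have hσb : σ b = g * σ g * ↑b⁻¹ := by rw [← hb, mul_assoc, b.mul_inv, mul_one]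
  refine ⟨σ g * σ ↑b⁻¹, ↑g⁻¹ * σ b, ?_, ?_, ?_⟩
  · calc σ (σ g * σ ↑b⁻¹) * (σ g * σ ↑b⁻¹) = ↑b⁻¹ * (g * σ g) * σ ↑b⁻¹ := by
          rw [σ_mul, σ_invol, σ_invol]; simp only [mul_assoc]
      _ = ↑b⁻¹ * b * (σ b * σ ↑b⁻¹) := by rw [← hb, ← hnormal.eq]; simp only [mul_assoc]
      _ = 1 := by rw [b.inv_mul, σ_mul_σ_inv, one_mul]
  · calc σ (↑g⁻¹ * σ b) * (↑g⁻¹ * σ b) = b * (σ ↑g⁻¹ * (↑g⁻¹ * g) * σ g) * ↑b⁻¹ := by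
          rw [σ_mul, σ_invol, hσb]; simp only [mul_assoc]
      _ = 1 := by rw [g.inv_mul, mul_one, σ_inv_mul_σ, mul_one, b.mul_inv]
  · rw [mul_assoc, mul_assoc, g.mul_inv_cancel_left, σ_inv_mul_σ, mul_one]

section Symplectic

variable {n : ℕ} {F : Type*} [Field F]

lemma symplecticJ_transpose : (symplecticJ n F)ᵀ = -symplecticJ n F := by
  simp [symplecticJ, fromBlocks_transpose, fromBlocks_neg]

lemma symplecticJ_mul_self : symplecticJ n F * symplecticJ n F = -1 := by
  simp [symplecticJ, fromBlocks_multiply, ← fromBlocks_one, fromBlocks_neg]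

lemma symplecticJ_mul_symplecticJ_mul (X : Matrix (Fin n ⊕ Fin n) (Fin n ⊕ Fin n) F) :
    symplecticJ n F * (symplecticJ n F * X) = -X := by
  rw [← mul_assoc, symplecticJ_mul_self, neg_one_mul]

lemma det_symplecticJ_ne_zero : (symplecticJ n F).det ≠ 0 := by
  intro h
  simpa [h, det_neg] using congrArg det (symplecticJ_mul_self (n := n) (F := F))

lemma dotProduct_symplecticJ_mulVec_self (x : Fin n ⊕ Fin n → F) :
    x ⬝ᵥ symplecticJ n F *ᵥ x = 0 := by
  simp [symplecticJ, fromBlocks_mulVec, dotProduct, Fintype.sum_sum_type, mul_comm, neg_mulVec]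

/-- The adjoint `J⁻¹ Xᵀ J` for the form `xᵀ J y`, using `J⁻¹ = -J`. -/
def symplecticAdjoint (X : Matrix (Fin n ⊕ Fin n) (Fin n ⊕ Fin n) F) :
    Matrix (Fin n ⊕ Fin n) (Fin n ⊕ Fin n) F :=
  -(symplecticJ n F * Xᵀ * symplecticJ n F)

lemma symplecticAdjoint_mul (X Y : Matrix (Fin n ⊕ Fin n) (Fin n ⊕ Fin n) F) :
    symplecticAdjoint (X * Y) = symplecticAdjoint Y * symplecticAdjoint X := by
  simp [symplecticAdjoint, mul_assoc, symplecticJ_mul_symplecticJ_mul]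

lemma symplecticAdjoint_involutive :
    Function.Involutive (symplecticAdjoint (n := n) (F := F)) := fun X ↦ by
  simp [symplecticAdjoint, symplecticJ_transpose, mul_assoc, symplecticJ_mul_symplecticJ_mul,
    symplecticJ_mul_self]

lemma symplecticAdjoint_mul_eq_neg (X Y : Matrix (Fin n ⊕ Fin n) (Fin n ⊕ Fin n) F) :
    symplecticAdjoint X * Y = -(symplecticJ n F * (Xᵀ * symplecticJ n F * Y)) := by
  simp [symplecticAdjoint, mul_assoc]

lemma isSymplecticMat_iff {X : Matrix (Fin n ⊕ Fin n) (Fin n ⊕ Fin n) F} :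
    IsSymplecticMat X ↔ symplecticAdjoint X * X = 1 := by
  rw [symplecticAdjoint_mul_eq_neg, IsSymplecticMat, neg_eq_iff_eq_neg,
    ← symplecticJ_mul_self]
  exact ⟨congrArg _, fun h ↦ by
    simpa [symplecticJ_mul_symplecticJ_mul] using congrArg (symplecticJ n F * ·) h⟩

lemma transpose_eq_symplecticAdjoint (X : Matrix (Fin n ⊕ Fin n) (Fin n ⊕ Fin n) F) :
    Xᵀ = symplecticJ n F * symplecticAdjoint X * -symplecticJ n F := by
  simp [symplecticAdjoint, mul_assoc, symplecticJ_mul_symplecticJ_mul, symplecticJ_mul_self]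

lemma isSymplecticMat_symplecticJ : IsSymplecticMat (symplecticJ n F) := by
  simp [IsSymplecticMat, symplecticJ_transpose, symplecticJ_mul_self]

namespace IsSymplecticMat

variable {X Y : Matrix (Fin n ⊕ Fin n) (Fin n ⊕ Fin n) F}

lemma mul (hX : IsSymplecticMat X) (hY : IsSymplecticMat Y) : IsSymplecticMat (X * Y) := by
  rw [isSymplecticMat_iff] at *
  rw [symplecticAdjoint_mul, mul_assoc, ← mul_assoc _ X, hX, one_mul, hY]

lemma neg (hX : IsSymplecticMat X) : IsSymplecticMat (-X) := by
  simpa [IsSymplecticMat] using hX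

lemma isUnit (hX : IsSymplecticMat X) : IsUnit X :=
  (isUnit_iff_isUnit_det X).2 (isUnit_det_of_left_inverse (isSymplecticMat_iff.1 hX))

end IsSymplecticMat

lemma symplecticAdjoint_mul_self_eq_of_transpose_mul_mul_eq
    {X G : Matrix (Fin n ⊕ Fin n) (Fin n ⊕ Fin n) F}
    (h : Xᵀ * symplecticJ n F * X = (G * symplecticAdjoint G)ᵀ * symplecticJ n F) :
    symplecticAdjoint X * X = G * symplecticAdjoint G :=
  calc symplecticAdjoint X * X = symplecticAdjoint (G * symplecticAdjoint G) := by
        rw [symplecticAdjoint_mul_eq_neg, h, ← mul_assoc]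
        rfl
    _ = G * symplecticAdjoint G := by
        rw [symplecticAdjoint_mul, symplecticAdjoint_involutive]

lemma exists_symplecticAdjoint_mul_self_eq (g : GL (Fin n ⊕ Fin n) F) :
    ∃ b : GL (Fin n ⊕ Fin n) F,
      symplecticAdjoint (b : Matrix (Fin n ⊕ Fin n) (Fin n ⊕ Fin n) F) * b =
        g * symplecticAdjoint (g : Matrix (Fin n ⊕ Fin n) (Fin n ⊕ Fin n) F) ∧
      Commute (b : Matrix (Fin n ⊕ Fin n) (Fin n ⊕ Fin n) F) (symplecticAdjoint b) := by
  set G : Matrix (Fin n ⊕ Fin n) (Fin n ⊕ Fin n) F := ↑g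
  have hUJ : (G * symplecticAdjoint G)ᵀ * symplecticJ n F =
      (Gᵀ * symplecticJ n F)ᵀ * symplecticJ n F * (Gᵀ * symplecticJ n F) := by
    simp [symplecticAdjoint, symplecticJ_transpose, mul_assoc]
  obtain ⟨b, hbU, hb⟩ := exists_commute_transpose_mul_mul_eq det_symplecticJ_ne_zero
    dotProduct_symplecticJ_mulVec_self fun x ↦ by
      rw [hUJ, dotProduct_transpose_mul_mul_mulVec, ← mulVec_mulVec]
      exact dotProduct_symplecticJ_mulVec_self _
  have hbσ := symplecticAdjoint_mul_self_eq_of_transpose_mul_mul_eq hb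
  have hdet : (symplecticAdjoint b).det * b.det ≠ 0 := by
    rw [← det_mul, hbσ]
    simp [G, symplecticAdjoint, det_neg, det_symplecticJ_ne_zero,
      ((isUnit_iff_isUnit_det _).1 g.isUnit).ne_zero]
  obtain ⟨b, rfl⟩ := (isUnit_iff_isUnit_det _).2 (right_ne_zero_of_mul hdet).isUnit
  refine ⟨b, hbσ, (Units.mul_left_inj b).1 ?_⟩
  rw [← hbσ] at hbU
  simpa only [mul_assoc] using hbU.eq

end Symplectic

theorem transpose_mem_doubleCoset_general (F : Type*) [Field F] (n : ℕ)
    (g : GL (Fin n ⊕ Fin n) F) :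
    ∃ h₁ h₂ : GL (Fin n ⊕ Fin n) F,
      IsSymplecticMat (h₁ : Matrix (Fin n ⊕ Fin n) (Fin n ⊕ Fin n) F) ∧
      IsSymplecticMat (h₂ : Matrix (Fin n ⊕ Fin n) (Fin n ⊕ Fin n) F) ∧
      (g : Matrix (Fin n ⊕ Fin n) (Fin n ⊕ Fin n) F)ᵀ =
        (h₁ : Matrix (Fin n ⊕ Fin n) (Fin n ⊕ Fin n) F) *
        (g : Matrix (Fin n ⊕ Fin n) (Fin n ⊕ Fin n) F) *
        (h₂ : Matrix (Fin n ⊕ Fin n) (Fin n ⊕ Fin n) F) := by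
  obtain ⟨b, hbσ, hnormal⟩ := exists_symplecticAdjoint_mul_self_eq g
  obtain ⟨h₁, h₂, hh₁, hh₂, hg⟩ := exists_apply_eq_mul_mul_of_normal
    (symplecticAdjoint (n := n) (F := F)) symplecticAdjoint_mul symplecticAdjoint_involutive g b
    hbσ hnormal
  have k₁ : IsSymplecticMat (symplecticJ n F * h₁) :=
    isSymplecticMat_symplecticJ.mul (isSymplecticMat_iff.2 hh₁)
  have k₂ : IsSymplecticMat (h₂ * -symplecticJ n F) :=
    (isSymplecticMat_iff.2 hh₂).mul isSymplecticMat_symplecticJ.neg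
  refine ⟨k₁.isUnit.unit, k₂.isUnit.unit, k₁, k₂, ?_⟩
  rw [IsUnit.unit_spec, IsUnit.unit_spec, transpose_eq_symplecticAdjoint, hg]
  simp only [mul_assoc]

/-- For every `g ∈ GL_{2n}(F)`, the transpose `gᵗ` lies in the double coset
`Sp_{2n}(F) · g · Sp_{2n}(F)`. -/
theorem transpose_mem_doubleCoset (F : Type*) [Field F] (n : ℕ) (hn : 1 ≤ n)
    (g : GL (Fin n ⊕ Fin n) F) :
    ∃ h₁ h₂ : GL (Fin n ⊕ Fin n) F,
      IsSymplecticMat (h₁ : Matrix (Fin n ⊕ Fin n) (Fin n ⊕ Fin n) F) ∧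
      IsSymplecticMat (h₂ : Matrix (Fin n ⊕ Fin n) (Fin n ⊕ Fin n) F) ∧
      (g : Matrix (Fin n ⊕ Fin n) (Fin n ⊕ Fin n) F)ᵀ =
        (h₁ : Matrix (Fin n ⊕ Fin n) (Fin n ⊕ Fin n) F) *
        (g : Matrix (Fin n ⊕ Fin n) (Fin n ⊕ Fin n) F) *
        (h₂ : Matrix (Fin n ⊕ Fin n) (Fin n ⊕ Fin n) F) :=
  transpose_mem_doubleCoset_general F n g
end

section
/- Let (V, ω) be a finite-dimensional vector space over a field F with a nondegenerate alternating bilinear form ω, and let x : V → V be an F-linear map which is ω-self-adjoint, i.e., ω(x v, u) = ω(v, x u) for all v, u ∈ V. Let P, Q ∈ F[t] be coprime polynomials with (P·Q)(x) = 0. Then the restriction of ω to the subspace ker(P(x)) is nondegenerate; in particular (ker(P(x)), ω|_{ker(P(x))}) is again a symplectic space. -/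
/-!
Polynomials in an `ω`-self-adjoint `x` are again self-adjoint. A Bézout identity `A P + B Q = 1`
shows that every `w ∈ ker P(x)` equals `(B Q)(x) w`, so moving `(B Q)(x)` across `ω` makes
`ker P(x)` and `ker Q(x)` orthogonal; since `(P Q)(x) = 0`, these kernels span `V`. A vector of
`ker P(x)` orthogonal to `ker P(x)` is thus orthogonal to all of `V`, hence zero.
-/

open Polynomial

namespace LinearMap

variable {R M N : Type*} [CommRing R] [AddCommGroup M] [Module R M]
  [AddCommGroup N] [Module R N] {B : M →ₗ[R] M →ₗ[R] N}

theorem IsSelfAdjoint.pow {f : Module.End R M} (hf : B.IsSelfAdjoint f) :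
    ∀ n : ℕ, B.IsSelfAdjoint ⇑(f ^ n)
  | 0 => isAdjointPair_one
  | n + 1 => by
    have h := hf.mul (IsSelfAdjoint.pow hf n)
    rwa [← pow_succ', ← pow_succ] at h

theorem IsSelfAdjoint.aeval {f : Module.End R M} (hf : B.IsSelfAdjoint f) (p : R[X]) :
    B.IsSelfAdjoint (Polynomial.aeval f p) := by
  induction p using Polynomial.induction_on' with
  | add p q hp hq =>
    rw [map_add]
    exact hp.add hq
  | monomial n c =>
    rw [aeval_monomial, Algebra.algebraMap_eq_smul_one, smul_mul_assoc, one_mul]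
    exact (hf.pow n).smul c

theorem IsSelfAdjoint.apply_eq_zero_of_mem_ker_aeval_of_isCoprime {f : Module.End R M}
    (hf : B.IsSelfAdjoint f) {p q : R[X]} (hpq : IsCoprime p q) {v w : M}
    (hv : v ∈ ker (Polynomial.aeval f p)) (hw : w ∈ ker (Polynomial.aeval f q)) : B v w = 0 := by
  obtain ⟨a, b, hab⟩ := hpq
  have hv_eq : Polynomial.aeval f (b * q) v = v := by
    simpa only [map_add, aeval_mul, LinearMap.add_apply, Module.End.mul_apply, mem_ker.mp hv, map_zero, zero_add,
      aeval_one, Module.End.one_apply] using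
      congr_arg (fun r : R[X] => Polynomial.aeval f r v) hab
  rw [← hv_eq, hf.aeval, aeval_mul, Module.End.mul_apply, mem_ker.mp hw, map_zero, map_zero]

theorem SeparatingLeft.exists_mem_apply_ne_zero_of_sup_eq_top (hB : B.SeparatingLeft)
    {W W' : Submodule R M} (hWW' : W ⊔ W' = ⊤) (horth : ∀ v ∈ W, ∀ w ∈ W', B v w = 0)
    {v : M} (hv : v ∈ W) (hv0 : v ≠ 0) : ∃ w ∈ W, B v w ≠ 0 := by
  by_contra! h
  refine hv0 (hB v fun u => ?_)
  obtain ⟨w, hw, w', hw', rfl⟩ := Submodule.mem_sup.mp (hWW' ▸ Submodule.mem_top : u ∈ W ⊔ W')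
  rw [map_add, h w hw, horth v hv w' hw', add_zero]

end LinearMap

theorem restriction_nondegenerate_ker_general (F V : Type*) [Field F] [AddCommGroup V]
    [Module F V]
    (ω : LinearMap.BilinForm F V) (hnd : ω.Nondegenerate)
    (x : Module.End F V) (hx : ∀ v u : V, ω (x v) u = ω v (x u))
    (P Q : Polynomial F) (hPQ : IsCoprime P Q)
    (hPQx : Polynomial.aeval x (P * Q) = 0) :
    ∀ w ∈ LinearMap.ker (Polynomial.aeval x P), w ≠ 0 →
      ∃ w' ∈ LinearMap.ker (Polynomial.aeval x P), ω w w' ≠ 0 := by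
  have hspan : LinearMap.ker (aeval x P) ⊔ LinearMap.ker (aeval x Q) = ⊤ := by
    rw [sup_ker_aeval_eq_ker_aeval_mul_of_coprime x hPQ, hPQx, LinearMap.ker_zero]
  have horth : ∀ v ∈ LinearMap.ker (aeval x P), ∀ u ∈ LinearMap.ker (aeval x Q), ω v u = 0 :=
    fun _ hv _ hu => LinearMap.IsSelfAdjoint.apply_eq_zero_of_mem_ker_aeval_of_isCoprime hx hPQ hv hu
  exact fun w hw hw0 => hnd.1.exists_mem_apply_ne_zero_of_sup_eq_top hspan horth hw hw0

/-- Let `(V, ω)` be a finite-dimensional symplectic space (ω nondegenerate and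
alternating), `x` an `ω`-self-adjoint endomorphism, and `P, Q` coprime polynomials
with `(P·Q)(x) = 0`. Then the restriction of `ω` to `ker P(x)` is nondegenerate. -/
theorem restriction_nondegenerate_ker (F V : Type*) [Field F] [AddCommGroup V]
    [Module F V] [FiniteDimensional F V]
    (ω : LinearMap.BilinForm F V) (hnd : ω.Nondegenerate) (halt : ω.IsAlt)
    (x : Module.End F V) (hx : ∀ v u : V, ω (x v) u = ω v (x u))
    (P Q : Polynomial F) (hPQ : IsCoprime P Q)
    (hPQx : Polynomial.aeval x (P * Q) = 0) :
    ∀ w ∈ LinearMap.ker (Polynomial.aeval x P), w ≠ 0 →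
      ∃ w' ∈ LinearMap.ker (Polynomial.aeval x P), ω w w' ≠ 0 :=
  restriction_nondegenerate_ker_general F V ω hnd x hx P Q hPQ hPQx
end
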